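/- arXiv:1512.09123 — 2 statements merged into one kernel-verified Lean document; each statement's English description precedes it below -/
import Mathlib

section
/- Fix p ∈ ℤ_{>0} and α, β ∈ ℂ. Let w : ℤ → ℝ → ℂ be t-differentiable, satisfying for all n, t: ∂_t w(n,t) = w(n,t)·(α + β·w(n,t))·(∏_{i=1}^p w(n+i,t) − ∏_{i=1}^p w(n−i,t)). Define u(n,t) := (α + β·w(n+p,t))·∏_{i=0}^{p−1} w(n+i,t). Then u satisfies the Narita–Itoh–Bogoyavlensky lattice: ∂_t u(n,t) = u(n,t)·(∑_{k=1}^p u(n+k,t) − ∑_{k=1}^p u(n−k,t)) for all n and t. -/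
/-!
Write `Q m = w_m ⋯ w_{m+p-1}` and `P m = w_m ⋯ w_{m+p}`, so that `u = α Q + β P`. The equation
for `w` reads `w_m' = w_m g_m` with `g_m = (α + β w_m)(Q (m+1) - Q (m-p))`, hence
`u_n' = u_n (β w_{n+p} (Q (n+p+1) - Q n) + ∑_{i<p} g_{n+i})`. Since `w_m Q (m+1) = P m` and
`w_m Q (m-p) = P (m-p)`, we get `g_m = α (Q (m+1) - Q (m-p)) + β (P m - P (m-p))`, while
`β w_{n+p} (Q (n+p+1) - Q n) = β (P (n+p) - P n)` telescopes into `∑_{i<p} β (P (n+i+1) - P (n+i))`.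
Adding up, the bracket becomes `∑_{k=1}^p (u_{n+k} - u_{n-k})`.
-/

open Finset

@[to_additive]
theorem Finset.prod_range_sub_succ {M : Type*} [CommMonoid M] (f : ℤ → M) (p : ℕ) (n : ℤ) :
    ∏ k ∈ range p, f (n - (k + 1)) = ∏ i ∈ range p, f (n + i - p) := by
  refine prod_nbij' (p - 1 - ·) (p - 1 - ·) ?_ ?_ ?_ ?_ fun i hi => congrArg f ?_ <;>
    simp only [mem_range] at * <;> omega

theorem HasDerivAt.fun_finsetProd_mul_sum {ι 𝕜 𝔸 : Type*} [NontriviallyNormedField 𝕜]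
    [NormedCommRing 𝔸] [NormedAlgebra 𝕜 𝔸] {s : Finset ι} {f : ι → 𝕜 → 𝔸} {g : ι → 𝔸} {x : 𝕜}
    (hf : ∀ i ∈ s, HasDerivAt (f i) (f i x * g i) x) :
    HasDerivAt (∏ i ∈ s, f i ·) ((∏ i ∈ s, f i x) * ∑ i ∈ s, g i) x := by
  classical
  induction s using Finset.induction_on with
  | empty => simpa using hasDerivAt_const x (1 : 𝔸)
  | insert a s ha ih =>
    simp only [prod_insert ha, sum_insert ha]
    convert (hf a (mem_insert_self a s)).fun_mul (ih fun i hi => hf i (mem_insert_of_mem hi))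
      using 1
    ring

section BlockProd

variable {M : Type*} [CommMonoid M] (W : ℤ → M) (p : ℕ)

def blockProd (m : ℤ) : M :=
  ∏ i ∈ range p, W (m + i)

theorem blockProd_succ (m : ℤ) : blockProd W (p + 1) m = blockProd W p m * W (m + p) :=
  prod_range_succ _ _

theorem blockProd_succ' (m : ℤ) : blockProd W (p + 1) m = W m * blockProd W p (m + 1) := by
  simp only [blockProd, prod_range_succ', Nat.cast_add, Nat.cast_one, Nat.cast_zero, add_zero,
    mul_comm (W m), add_assoc, add_comm (1 : ℤ)]

theorem prod_range_add_succ_eq_blockProd (n : ℤ) :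
    ∏ k ∈ range p, W (n + (k + 1)) = blockProd W p (n + 1) := by
  simp only [blockProd, add_assoc, add_comm (1 : ℤ)]

theorem prod_range_sub_succ_eq_blockProd (n : ℤ) :
    ∏ k ∈ range p, W (n - (k + 1)) = blockProd W p (n - p) :=
  (prod_range_sub_succ W p n).trans (prod_congr rfl fun _ _ => by rw [add_sub_right_comm])

end BlockProd

section Miura

variable {R : Type*} [CommRing R] (α β : R) (W : ℤ → R) (p : ℕ)

def miura (m : ℤ) : R :=
  (α + β * W (m + p)) * blockProd W p m

theorem miura_eq (m : ℤ) :
    miura α β W p m = α * blockProd W p m + β * blockProd W (p + 1) m := by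
  rw [miura, blockProd_succ]
  ring

theorem sum_miura_sub_sum_miura (n : ℤ) :
    ∑ k ∈ range p, miura α β W p (n + (k + 1)) - ∑ k ∈ range p, miura α β W p (n - (k + 1))
      = β * W (n + p) * (blockProd W p (n + p + 1) - blockProd W p n)
        + ∑ i ∈ range p,
            (α + β * W (n + i)) * (blockProd W p (n + i + 1) - blockProd W p (n + i - p)) := by
  have telescope : W (n + p) * (blockProd W p (n + p + 1) - blockProd W p n)
      = ∑ i ∈ range p, (blockProd W (p + 1) (n + (i + 1)) - blockProd W (p + 1) (n + i)) := by
    have := sum_range_sub (fun i : ℕ => blockProd W (p + 1) (n + i)) p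
    push_cast at this
    rw [this, blockProd_succ', blockProd_succ, add_zero]
    ring
  rw [sum_range_sub_succ, ← sum_sub_distrib, mul_assoc, telescope, mul_sum, ← sum_add_distrib]
  refine sum_congr rfl fun i _ => ?_
  rw [miura_eq, miura_eq, blockProd_succ' W p (n + i), blockProd_succ W p (n + i - p),
    sub_add_cancel, add_assoc]
  ring

end Miura

theorem hasDerivAt_miura {𝕜 𝔸 : Type*} [NontriviallyNormedField 𝕜] [NormedCommRing 𝔸]
    [NormedAlgebra 𝕜 𝔸] (α β : 𝔸) (p : ℕ) (w : ℤ → 𝕜 → 𝔸) (x : 𝕜)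
    (hw : ∀ m : ℤ, HasDerivAt (w m) (w m x * (α + β * w m x)
      * ((∏ i ∈ range p, w (m + (i + 1)) x) - ∏ i ∈ range p, w (m - (i + 1)) x)) x) (n : ℤ) :
    HasDerivAt (fun y => miura α β (w · y) p n) (miura α β (w · x) p n
      * (β * w (n + p) x * (blockProd (w · x) p (n + p + 1) - blockProd (w · x) p n)
        + ∑ i ∈ range p, (α + β * w (n + i) x)
          * (blockProd (w · x) p (n + i + 1) - blockProd (w · x) p (n + i - p)))) x := by
  have hlog : ∀ m, HasDerivAt (w m) (w m x * ((α + β * w m x)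
      * (blockProd (w · x) p (m + 1) - blockProd (w · x) p (m - p)))) x := fun m => by
    rw [← prod_range_add_succ_eq_blockProd (w · x),
      ← prod_range_sub_succ_eq_blockProd (w · x), ← mul_assoc]
    exact hw m
  have hblock := HasDerivAt.fun_finsetProd_mul_sum (s := range p) fun i _ => hlog (n + i)
  have hfactor := ((hlog (n + p)).const_mul β).const_add α
  convert hfactor.fun_mul hblock using 1
  · rfl
  rw [add_sub_cancel_right]
  simp only [miura, blockProd]
  ring

theorem miura_wtw_to_bogoyavlensky_general
    (p : ℕ) (α β : ℂ) (w : ℤ → ℝ → ℂ)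
    (hw : ∀ (n : ℤ) (t : ℝ),
      HasDerivAt (w n)
        (w n t * (α + β * w n t)
          * ((∏ i ∈ Finset.range p, w (n + (i + 1)) t)
              - ∏ i ∈ Finset.range p, w (n - (i + 1)) t)) t)
    (u : ℤ → ℝ → ℂ)
    (hu : ∀ (n : ℤ) (t : ℝ),
      u n t = (α + β * w (n + p) t) * ∏ i ∈ Finset.range p, w (n + i) t) :
    ∀ (n : ℤ) (t : ℝ),
      HasDerivAt (u n)
        (u n t * ((∑ k ∈ Finset.range p, u (n + (k + 1)) t)
            - ∑ k ∈ Finset.range p, u (n - (k + 1)) t)) t := by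
  intro n t
  obtain rfl : u = fun m s => miura α β (w · s) p m := funext₂ hu
  simpa only [sum_miura_sub_sum_miura] using hasDerivAt_miura α β p w t (hw · t) n

/-- For `p ∈ ℤ_{>0}` and `α, β ∈ ℂ`, the formula
`u = (α + βw_p)·∏_{i=0}^{p−1} w_i`
is a Miura-type transformation from the equation
`wₜ = w(α + βw)(∏_{i=1}^p w_i − ∏_{i=1}^p w_{−i})`
to the Narita–Itoh–Bogoyavlensky lattice
`uₜ = u(∑_{k=1}^p u_k − ∑_{k=1}^p u_{−k})`. -/
theorem miura_wtw_to_bogoyavlensky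
    (p : ℕ) (hp : 0 < p) (α β : ℂ) (w : ℤ → ℝ → ℂ)
    (hw : ∀ (n : ℤ) (t : ℝ),
      HasDerivAt (w n)
        (w n t * (α + β * w n t)
          * ((∏ i ∈ Finset.range p, w (n + (i + 1)) t)
              - ∏ i ∈ Finset.range p, w (n - (i + 1)) t)) t)
    (u : ℤ → ℝ → ℂ)
    (hu : ∀ (n : ℤ) (t : ℝ),
      u n t = (α + β * w (n + p) t) * ∏ i ∈ Finset.range p, w (n + i) t) :
    ∀ (n : ℤ) (t : ℝ),
      HasDerivAt (u n)
        (u n t * ((∑ k ∈ Finset.range p, u (n + (k + 1)) t)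
            - ∑ k ∈ Finset.range p, u (n - (k + 1)) t)) t :=
  miura_wtw_to_bogoyavlensky_general p α β w hw u hu
end

section
/- Let b₁, b₂, b₃, b₄ ∈ ℂ with b₁b₄ − b₂b₃ ≠ 0. Define v¹(n,t) := (b₁t + b₃ − n·b₁)·e^t and v²(n,t) := (b₂t + b₄ − n·b₂)·e^t for n ∈ ℤ, t ∈ ℝ. Then for all n and t: v¹(n−1,t)·v²(n,t) − v¹(n,t)·v²(n−1,t) ≠ 0, and the pair (v¹,v²) satisfies the system ∂_t v¹(n,t) = v¹(n−1,t)·(v¹(n,t)v²(n+1,t) − v¹(n+1,t)v²(n,t)) / (v¹(n−1,t)v²(n,t) − v¹(n,t)v²(n−1,t)), ∂_t v²(n,t) = v²(n−1,t)·(v¹(n,t)v²(n+1,t) − v¹(n+1,t)v²(n,t)) / (v¹(n−1,t)v²(n,t) − v¹(n,t)v²(n−1,t)). -/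
/-!
Each `vⁱ` is of the form `(b t + c - n b) eᵗ`, whose `t`-derivative is the same expression at
`n - 1`, so `∂ₜ vⁱ(n) = vⁱ(n-1)`. The Casoratian `v¹(n) v²(n+1) - v¹(n+1) v²(n)` equals
`(b₁b₄ - b₂b₃) e^{2t}` for every `n`; being nonzero and independent of `n`, the quotient in the
modified Toda system is `1`, and the system reduces to `∂ₜ vⁱ(n) = vⁱ(n-1)`.
-/

noncomputable def affineExpSeq (b c : ℂ) (n : ℤ) (t : ℝ) : ℂ :=
  (b * t + c - n * b) * Real.exp t

def casoratian (v w : ℤ → ℝ → ℂ) (n : ℤ) (t : ℝ) : ℂ :=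
  v n t * w (n + 1) t - v (n + 1) t * w n t

theorem hasDerivAt_affineExpSeq (b c : ℂ) (n : ℤ) (t : ℝ) :
    HasDerivAt (affineExpSeq b c n) (affineExpSeq b c (n - 1) t) t := by
  have hlin : HasDerivAt (fun s : ℝ => b * s + c - n * b) b t := by
    simpa using ((hasDerivAt_id t).ofReal_comp.const_mul b).add_const c |>.sub_const (n * b)
  refine (hlin.fun_mul (Real.hasDerivAt_exp t).ofReal_comp).congr_deriv ?_
  simp only [affineExpSeq]
  push_cast
  ring

theorem casoratian_affineExpSeq (b₁ b₂ b₃ b₄ : ℂ) (n : ℤ) (t : ℝ) :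
    casoratian (affineExpSeq b₁ b₃) (affineExpSeq b₂ b₄) n t
      = (b₁ * b₄ - b₂ * b₃) * Real.exp t ^ 2 := by
  simp only [casoratian, affineExpSeq]
  push_cast
  ring

theorem modifiedToda_of_hasDerivAt_shift {v w : ℤ → ℝ → ℂ} {n : ℤ} {t : ℝ}
    (hv : HasDerivAt (v n) (v (n - 1) t) t) (hw : HasDerivAt (w n) (w (n - 1) t) t)
    (hshift : casoratian v w n t = casoratian v w (n - 1) t)
    (hne : casoratian v w (n - 1) t ≠ 0) :
    v (n - 1) t * w n t - v n t * w (n - 1) t ≠ 0 ∧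
      HasDerivAt (v n)
        (v (n - 1) t * (v n t * w (n + 1) t - v (n + 1) t * w n t)
          / (v (n - 1) t * w n t - v n t * w (n - 1) t)) t ∧
      HasDerivAt (w n)
        (w (n - 1) t * (v n t * w (n + 1) t - v (n + 1) t * w n t)
          / (v (n - 1) t * w n t - v n t * w (n - 1) t)) t := by
  have hden : v (n - 1) t * w n t - v n t * w (n - 1) t = casoratian v w (n - 1) t := by
    simp only [casoratian, sub_add_cancel]
  have hquot (x : ℂ) : x * casoratian v w n t / casoratian v w (n - 1) t = x := by
    rw [hshift, mul_div_assoc, div_self hne, mul_one]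
  refine ⟨hden ▸ hne, ?_, ?_⟩
  · rwa [hden, ← casoratian, hquot]
  · rwa [hden, ← casoratian, hquot]

/-- Explicit solutions of the modified Toda system: for constants
`b₁, b₂, b₃, b₄ ∈ ℂ` with `b₁b₄ − b₂b₃ ≠ 0`, the functions
`v¹(n,t) = (b₁t + b₃ − nb₁)eᵗ`, `v²(n,t) = (b₂t + b₄ − nb₂)eᵗ`
have nonvanishing denominator `v¹₋₁v² − v¹v²₋₁` and satisfy the modified Toda
system. -/
theorem explicit_solution_modified_toda
    (b₁ b₂ b₃ b₄ : ℂ) (h : b₁ * b₄ - b₂ * b₃ ≠ 0)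
    (v1 v2 : ℤ → ℝ → ℂ)
    (hv1 : ∀ (n : ℤ) (t : ℝ),
      v1 n t = (b₁ * (t : ℂ) + b₃ - (n : ℂ) * b₁) * (Real.exp t : ℂ))
    (hv2 : ∀ (n : ℤ) (t : ℝ),
      v2 n t = (b₂ * (t : ℂ) + b₄ - (n : ℂ) * b₂) * (Real.exp t : ℂ)) :
    ∀ (n : ℤ) (t : ℝ),
      v1 (n - 1) t * v2 n t - v1 n t * v2 (n - 1) t ≠ 0 ∧
      HasDerivAt (v1 n)
        (v1 (n - 1) t * (v1 n t * v2 (n + 1) t - v1 (n + 1) t * v2 n t)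
          / (v1 (n - 1) t * v2 n t - v1 n t * v2 (n - 1) t)) t ∧
      HasDerivAt (v2 n)
        (v2 (n - 1) t * (v1 n t * v2 (n + 1) t - v1 (n + 1) t * v2 n t)
          / (v1 (n - 1) t * v2 n t - v1 n t * v2 (n - 1) t)) t := by
  obtain rfl : v1 = affineExpSeq b₁ b₃ := funext₂ hv1
  obtain rfl : v2 = affineExpSeq b₂ b₄ := funext₂ hv2
  intro n t
  refine modifiedToda_of_hasDerivAt_shift (hasDerivAt_affineExpSeq _ _ n t)
    (hasDerivAt_affineExpSeq _ _ n t) ?_ ?_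
  · rw [casoratian_affineExpSeq, casoratian_affineExpSeq]
  · rw [casoratian_affineExpSeq]
    exact mul_ne_zero h (pow_ne_zero 2 (Complex.ofReal_ne_zero.mpr (Real.exp_ne_zero t)))
end
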